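/- arXiv:2105.05955 — 2 statements merged into one kernel-verified Lean document; each statement's English description precedes it below -/
import Mathlib

section
/- Let N ∈ ℝ³ be nonzero, q ∈ ℝ³, D_c = R_{[N,q]}(0), N_D = R_{[N,0]}(−e₃), and let T ∈ ℝ³ with T ∉ Z≤0. Then T lies on the forward-pointing ray {D_c + t·N_D : t ≥ 0} if and only if there exists K ∈ Z≤0 with ‖K − q‖ = ‖T − q‖ such that N is a nonzero scalar multiple of T − K. The same holds for the backward-pointing ray {D_c + t·N_D : t ≤ 0} with Z≤0 replaced by Z≥0 in both occurrences. -/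
/-!
Since `refl3 N q` is affine with linear part `refl3 N 0`, the point `D_c + t • N_D` of the
ray is the mirror image `refl3 N q (-t • e₃)` of a point `K` of the z-axis. A reflection in a
plane through `q` keeps the distance to `q` and moves `K` along `N`; conversely, if `K ≠ T`
are equidistant from `q`, their perpendicular bisector passes through `q` and has normal
`T - K`, so the reflection in it sends `K` to `T`. The hypothesis `T ∉ Z` rules out `K = T`.
-/

open RealInnerProductSpace

noncomputable section

/-- ℝ³ with the Euclidean inner product and norm. -/
abbrev E3 := EuclideanSpace ℝ (Fin 3)

/-- The standard basis vector e₃ = (0,0,1). -/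
def e3 : E3 := EuclideanSpace.single 2 1

/-- Reflection over the plane `{x | ⟪N, x - q⟫ = 0}`:
`R_{[N,q]}(a) = a − 2(⟪N, a − q⟫/‖N‖²) • N`. -/
def refl3 (N q a : E3) : E3 := a - (2 * ⟪N, a - q⟫ / ‖N‖ ^ 2) • N

/-- The nonpositive part of the z-axis, `Z≤0`. -/
def Zneg : Set E3 := {x | ∃ t : ℝ, t ≤ 0 ∧ x = t • e3}

/-- The nonnegative part of the z-axis, `Z≥0`. -/
def Zpos : Set E3 := {x | ∃ t : ℝ, 0 ≤ t ∧ x = t • e3}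


lemma refl3_smul (N q a : E3) (t : ℝ) :
    refl3 N q (t • a) = refl3 N q 0 + t • refl3 N 0 a := by
  unfold refl3
  simp only [inner_sub_right, inner_smul_right, inner_neg_right, sub_zero, zero_sub]
  match_scalars <;> ring

lemma refl3_sub_self (N q a : E3) :
    refl3 N q a - a = (-(2 * ⟪N, a - q⟫ / ‖N‖ ^ 2)) • N := by
  rw [refl3, sub_sub_cancel_left, neg_smul]

lemma norm_refl3_sub (N q a : E3) : ‖refl3 N q a - q‖ = ‖a - q‖ := by
  rcases eq_or_ne N 0 with rfl | hN
  · simp [refl3]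
  have hN2 : ‖N‖ ^ 2 ≠ 0 := by positivity
  have hdecomp : refl3 N q a - q = (a - q) - (2 * ⟪N, a - q⟫ / ‖N‖ ^ 2) • N := by
    rw [refl3]; abel
  rw [← sq_eq_sq₀ (norm_nonneg _) (norm_nonneg _), hdecomp, norm_sub_sq_real,
    real_inner_smul_right, norm_smul, mul_pow, Real.norm_eq_abs, sq_abs, real_inner_comm]
  field_simp
  ring

lemma refl3_smul_normal {c : ℝ} (hc : c ≠ 0) (N q a : E3) :
    refl3 (c • N) q a = refl3 N q a := by
  unfold refl3
  rw [inner_smul_left, norm_smul, mul_pow, Real.norm_eq_abs, sq_abs, smul_smul]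
  congr 1
  rcases eq_or_ne N 0 with rfl | hN
  · simp
  congr 1
  simp only [conj_trivial]
  field_simp

lemma refl3_sub_eq_of_norm_eq {q K T : E3} (h : ‖K - q‖ = ‖T - q‖) :
    refl3 (T - K) q K = T := by
  rcases eq_or_ne T K with rfl | hTK
  · simp [refl3]
  have hTK2 : ‖T - K‖ ^ 2 ≠ 0 := by simpa [sub_eq_zero] using hTK
  have hinner : 2 * ⟪T - K, K - q⟫ = -‖T - K‖ ^ 2 := by
    have hsum : T - q = (K - q) + (T - K) := by abel
    have h2 := congrArg (· ^ 2) h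
    simp only [hsum, norm_add_sq_real] at h2
    linarith [real_inner_comm (T - K) (K - q)]
  rw [refl3, hinner, neg_div, div_self hTK2, neg_smul, one_smul, sub_neg_eq_add, add_sub_cancel]

lemma eq_refl3_iff {N q K T : E3} (hTK : T ≠ K) :
    T = refl3 N q K ↔ ‖K - q‖ = ‖T - q‖ ∧ ∃ c : ℝ, c ≠ 0 ∧ N = c • (T - K) := by
  constructor
  · rintro rfl
    refine ⟨(norm_refl3_sub N q K).symm, ?_⟩
    set s : ℝ := -(2 * ⟪N, K - q⟫ / ‖N‖ ^ 2)
    have hs : refl3 N q K - K = s • N := refl3_sub_self N q K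
    have hs0 : s ≠ 0 := by
      rintro h0
      rw [h0, zero_smul, sub_eq_zero] at hs
      exact hTK hs
    exact ⟨s⁻¹, inv_ne_zero hs0, by rw [hs, smul_smul, inv_mul_cancel₀ hs0, one_smul]⟩
  · rintro ⟨hnorm, c, hc, rfl⟩
    rw [refl3_smul_normal hc, refl3_sub_eq_of_norm_eq hnorm]

lemma exists_ray_eq_iff {P : ℝ → Prop} (N q : E3) {T : E3}
    (hT : T ∉ {x : E3 | ∃ s, P s ∧ x = s • e3}) :
    (∃ t : ℝ, P (-t) ∧ T = refl3 N q 0 + t • refl3 N 0 (-e3)) ↔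
      ∃ K ∈ {x : E3 | ∃ s, P s ∧ x = s • e3},
        ‖K - q‖ = ‖T - q‖ ∧ ∃ c : ℝ, c ≠ 0 ∧ N = c • (T - K) := by
  have hray (t : ℝ) : refl3 N q 0 + t • refl3 N 0 (-e3) = refl3 N q ((-t) • e3) := by
    rw [← refl3_smul, smul_neg, neg_smul]
  constructor
  · rintro ⟨t, ht, hTt⟩
    rw [hray] at hTt
    have hTK : T ≠ (-t) • e3 := fun h => hT ⟨-t, ht, h⟩
    exact ⟨(-t) • e3, ⟨-t, ht, rfl⟩, (eq_refl3_iff hTK).mp hTt⟩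
  · rintro ⟨_, ⟨s, hs, rfl⟩, hK⟩
    have hTK : T ≠ s • e3 := fun h => hT ⟨s, hs, h⟩
    refine ⟨-s, by rwa [neg_neg], ?_⟩
    rw [hray, neg_neg]
    exact (eq_refl3_iff hTK).mpr hK

theorem constrained_affine_pointing_general (N q : E3) (T : E3) :
    (T ∉ Zneg →
      ((∃ t : ℝ, 0 ≤ t ∧ T = refl3 N q 0 + t • refl3 N 0 (-e3)) ↔
        ∃ K ∈ Zneg, ‖K - q‖ = ‖T - q‖ ∧ ∃ c : ℝ, c ≠ 0 ∧ N = c • (T - K))) ∧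
    (T ∉ Zpos →
      ((∃ t : ℝ, t ≤ 0 ∧ T = refl3 N q 0 + t • refl3 N 0 (-e3)) ↔
        ∃ K ∈ Zpos, ‖K - q‖ = ‖T - q‖ ∧ ∃ c : ℝ, c ≠ 0 ∧ N = c • (T - K))) := by
  refine ⟨fun hT => ?_, fun hT => ?_⟩
  · simpa only [Zneg, neg_nonpos] using exists_ray_eq_iff (P := (· ≤ 0)) N q hT
  · simpa only [Zpos, neg_nonneg] using exists_ray_eq_iff (P := (0 ≤ ·)) N q hT

/-- **Constrained-midplane affine pointing.** For a midplane with normal `N ≠ 0`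
through `q`, and a target `T ∉ Z≤0`: the configuration points at `T` iff there is
`K ∈ Z≤0` on the sphere centered at `q` through `T` with `N` a nonzero multiple of
`T − K`; analogously for backward-pointing with `Z≥0`. -/
theorem constrained_affine_pointing (N q : E3) (hN : N ≠ 0) (T : E3) :
    (T ∉ Zneg →
      ((∃ t : ℝ, 0 ≤ t ∧ T = refl3 N q 0 + t • refl3 N 0 (-e3)) ↔
        ∃ K ∈ Zneg, ‖K - q‖ = ‖T - q‖ ∧ ∃ c : ℝ, c ≠ 0 ∧ N = c • (T - K))) ∧
    (T ∉ Zpos →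
      ((∃ t : ℝ, t ≤ 0 ∧ T = refl3 N q 0 + t • refl3 N 0 (-e3)) ↔
        ∃ K ∈ Zpos, ‖K - q‖ = ‖T - q‖ ∧ ∃ c : ℝ, c ≠ 0 ∧ N = c • (T - K))) :=
  constrained_affine_pointing_general N q T
end
end

section
/- Let ρ̂ ∈ ℝ³ be a unit vector with ⟨ρ̂, e₃⟩ = 0, let T_ρ, T_z ∈ ℝ with T_ρ ≠ 0, and set T = T_ρ·ρ̂ + T_z·e₃. For t ∈ ℝ, define c(t) = (‖T‖² − t²)/‖T − t·e₃‖² and r(t) = c(t)·(T − t·e₃) = ρ(t)·ρ̂ + z(t)·e₃ where ρ(t) = c(t)·T_ρ and z(t) = c(t)·(T_z − t). Then for every t ∈ ℝ: ρ(t)³ + ρ(t)·z(t)² + T_ρ·(z(t)² − ρ(t)²) − 2T_z·ρ(t)·z(t) = 0. -/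
open RealInnerProductSpace

noncomputable section

/-! The parameter `c = N / D` satisfies `c * D = N` unless `D = 0`, in which case `c = 0`;
either way `c * (c * D - N) = 0`. Writing `w = T_z - t`, the cubic evaluated at
`(c T_ρ, c w)` factors as `c² T_ρ (c (T_ρ² + w²) - (T_ρ² + T_z² - t²))`, and the two
quadratics in this factor are `‖T - t e₃‖²` and `‖T‖² - t²`. -/

theorem div_mul_div_mul_sub_eq_zero {K : Type*} [Field K] (a b : K) :
    a / b * (a / b * b - a) = 0 := by
  rcases eq_or_ne b 0 with rfl | hb
  · simp
  · simp [div_mul_cancel₀ a hb]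

theorem norm_smul_add_smul_sq_of_inner_eq_zero {F : Type*} [NormedAddCommGroup F]
    [InnerProductSpace ℝ F] {u v : F} (h : ⟪u, v⟫ = 0) (a b : ℝ) :
    ‖a • u + b • v‖ ^ 2 = a ^ 2 * ‖u‖ ^ 2 + b ^ 2 * ‖v‖ ^ 2 := by
  rw [norm_add_sq_real, real_inner_smul_left, real_inner_smul_right, h, norm_smul, norm_smul,
    mul_pow, mul_pow, Real.norm_eq_abs, Real.norm_eq_abs, sq_abs, sq_abs]
  ring

theorem norm_e3 : ‖e3‖ = 1 := by
  simp [e3]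

theorem affine_locus_param_on_cubic_general (ρhat : E3) (hρ : ‖ρhat‖ = 1)
    (hperp : ⟪ρhat, e3⟫ = 0) (Tρ Tz : ℝ) (t : ℝ) :
    let T := Tρ • ρhat + Tz • e3
    let c := (‖T‖ ^ 2 - t ^ 2) / ‖T - t • e3‖ ^ 2
    let ρ := c * Tρ
    let z := c * (Tz - t)
    ρ ^ 3 + ρ * z ^ 2 + Tρ * (z ^ 2 - ρ ^ 2) - 2 * Tz * ρ * z = 0 := by
  intro T c ρ z
  have norm_comb (a b : ℝ) : ‖a • ρhat + b • e3‖ ^ 2 = a ^ 2 + b ^ 2 := by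
    simp [norm_smul_add_smul_sq_of_inner_eq_zero hperp, hρ, norm_e3]
  have hT : ‖T‖ ^ 2 = Tρ ^ 2 + Tz ^ 2 := norm_comb Tρ Tz
  have hTt : ‖T - t • e3‖ ^ 2 = Tρ ^ 2 + (Tz - t) ^ 2 := by
    rw [← norm_comb, add_sub_assoc, ← sub_smul]
  have hc : c * (c * (Tρ ^ 2 + (Tz - t) ^ 2) - (Tρ ^ 2 + Tz ^ 2 - t ^ 2)) = 0 := by
    rw [← hT, ← hTt]
    exact div_mul_div_mul_sub_eq_zero _ _
  linear_combination c * Tρ * hc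

/-- **The rational parametrization lies on the cubic.** With `T = T_ρ • ρ̂ + T_z • e₃`,
`T_ρ ≠ 0`, `c(t) = (‖T‖² − t²)/‖T − t•e₃‖²`, `ρ(t) = c(t)·T_ρ`, `z(t) = c(t)·(T_z − t)`,
one has `E_T(ρ(t), z(t)) = 0` for every `t`. -/
theorem affine_locus_param_on_cubic (ρhat : E3) (hρ : ‖ρhat‖ = 1)
    (hperp : ⟪ρhat, e3⟫ = 0) (Tρ Tz : ℝ) (hTρ : Tρ ≠ 0) (t : ℝ) :
    let T := Tρ • ρhat + Tz • e3
    let c := (‖T‖ ^ 2 - t ^ 2) / ‖T - t • e3‖ ^ 2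
    let ρ := c * Tρ
    let z := c * (Tz - t)
    ρ ^ 3 + ρ * z ^ 2 + Tρ * (z ^ 2 - ρ ^ 2) - 2 * Tz * ρ * z = 0 :=
  affine_locus_param_on_cubic_general ρhat hρ hperp Tρ Tz t
end
end
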